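/- Let f be a set of monomials of degree 2 in R. The differential syzygy module Z of f (the first syzygy module of the transposed Jacobian module of f inside ⊕_i R dx_i) is generated by the vectors z_w associated to the non-split even closed walks w of length ≥ 4 in the graph G(f). -/

import Mathlib

/-!
`Z` is graded by multidegree: `a` is homogeneous of degree `D` when every `a_i f_i` is a multiple
of `x^D`. Such an `a` is `a_i = c_i x^D / f_i` for scalars `c_i` supported on the edges with
`f_i ∣ x^D`, and `a ∈ Z` says exactly that `c` lies in the kernel of the vertex-edge incidence
matrix of this subgraph. For an even closed walk `w`, `z_w` has this form with `c` the alternating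
edge count of `w`, which lies in that kernel; this gives one inclusion.

For the other it suffices, by duality, that every functional `φ` on edge vectors killing the
alternating counts of the non-split walks has the form `φ(ab) = ψ(a) + ψ(b)`. Splitting at a
repeated vertex writes the count of an even closed walk as a signed sum of counts of shorter ones,
and a closed walk of length 2 only retraces an edge because the `f_i` are distinct, so `φ` kills
the counts of all even closed walks. Then `ψ` is propagated along walks from a base point in each
connected component, its value at the base point being half the alternating sum of an odd closed
walk if there is one (this needs `2 ≠ 0`).
-/

noncomputable section

namespace PolarAlg

open MvPolynomial

variable (k : Type*) [Field k]

/-- The exponent vector of the degree-2 monomial attached to an edge (or loop) `e`. -/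
def sym2Exp {n : ℕ} (e : Sym2 (Fin n)) : Fin n → ℕ :=
  Sym2.lift ⟨fun a b i => (if a = i then 1 else 0) + (if b = i then 1 else 0),
    fun a b => funext fun i => add_comm _ _⟩ e

/-- The monomial with exponent vector `g`. -/
def mon {n : ℕ} (g : Fin n → ℕ) : MvPolynomial (Fin n) k := ∏ i, X i ^ g i

/-- The degree-2 monomial `f i` attached to the edge `ε i` of the graph of `f`. -/
def fmon {n : ℕ} {ι : Type*} (ε : ι → Sym2 (Fin n)) (i : ι) : MvPolynomial (Fin n) k :=
  mon k (sym2Exp (ε i))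

/-- `(vtx, eidx)` is an (even, of length `2r`) closed walk in the graph `G(f)` whose edges are
indexed by `ι` via `ε` : the `j`-th edge of the walk is the edge `ε (eidx j)`, joining
`vtx j` and `vtx (j+1)`. -/
def IsWalkIn {n r : ℕ} {ι : Type*} (ε : ι → Sym2 (Fin n)) (vtx : ZMod (2 * r) → Fin n)
    (eidx : ZMod (2 * r) → ι) : Prop :=
  ∀ j, ε (eidx j) = s(vtx j, vtx (j + 1))

/-- The exponent vector of the lcm `g` of the (distinct) edge monomials of a walk. -/
def supExp {n r : ℕ} (vtx : ZMod (2 * r) → Fin n) : Fin n → ℕ := fun l =>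
  (Finset.range (2 * r)).sup fun j =>
    sym2Exp (s(vtx (j : ZMod (2 * r)), vtx ((j : ZMod (2 * r)) + 1))) l

/-- The differential syzygy `z_w` attached to an even closed walk `w = (vtx, eidx)`:
its `i`-th coordinate is the sum of the alternating terms `± g/g_j` over the positions `j`
at which the walk traverses the edge `f i`. -/
def zw {n r : ℕ} {ι : Type*} [DecidableEq ι] (ε : ι → Sym2 (Fin n))
    (vtx : ZMod (2 * r) → Fin n) (eidx : ZMod (2 * r) → ι) : ι → MvPolynomial (Fin n) k :=
  fun i => ∑ j ∈ Finset.range (2 * r),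
    if eidx (j : ZMod (2 * r)) = i then
      (-1 : MvPolynomial (Fin n) k) ^ j * mon k fun l => supExp vtx l - sym2Exp (ε i) l
    else 0

/-- The binomial `p_w = T_{w⁺} - T_{w⁻}` attached to an even closed walk. -/
def pw {r : ℕ} {ι : Type*} (eidx : ZMod (2 * r) → ι) : MvPolynomial ι k :=
  (∏ j ∈ (Finset.range (2 * r)).filter (fun j => Even j), X (eidx (j : ZMod (2 * r)))) -
    ∏ j ∈ (Finset.range (2 * r)).filter (fun j => ¬ Even j), X (eidx (j : ZMod (2 * r)))

/-- The differential syzygy module `Z` of `f`, as the set of syzygies of the transposed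
Jacobian module: vectors `a` with `∑ i, a i · df i = 0`, i.e. `∑ i, a i ∂f i/∂x l = 0`
for every `l`. -/
def Zset (n : ℕ) {ι : Type*} [Fintype ι] (ε : ι → Sym2 (Fin n)) :
    Set (ι → MvPolynomial (Fin n) k) :=
  {a | ∀ l : Fin n, ∑ i, a i * pderiv l (fmon k ε i) = 0}

/-- The generators of the polar syzygy module: the `T`-gradients of the polynomial
relations of `f`, evaluated at `f`. -/
def polarSet (n : ℕ) {ι : Type*} [Fintype ι] (ε : ι → Sym2 (Fin n)) :
    Set (ι → MvPolynomial (Fin n) k) :=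
  {v | ∃ F : MvPolynomial ι k, aeval (fmon k ε) F = 0 ∧
    v = fun i => aeval (fmon k ε) (pderiv i F)}

/-- `f` is polarizable: the polar syzygy module `P` equals the differential syzygy module
`Z` (the inclusion `P ⊆ Z` always holds, by the chain rule). -/
def Polarizable (n : ℕ) {ι : Type*} [Fintype ι] (ε : ι → Sym2 (Fin n)) : Prop :=
  Zset k n ε ⊆ ↑(Submodule.span (MvPolynomial (Fin n) k) (polarSet k n ε))

end PolarAlg

namespace Polar

/-- An even closed walk of length `2r` splits if, after a cyclic rotation, it decomposes at a
repeated vertex into two smaller even closed walks, i.e. some vertex recurs at an even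
(nonzero, proper) distance along the walk. -/
def Splits {V : Type*} {r : ℕ} (vtx : ZMod (2 * r) → V) : Prop :=
  ∃ (j : ZMod (2 * r)) (s : ℕ), 0 < s ∧ s < r ∧ vtx j = vtx (j + (2 * s : ℕ))

/-- A non-split even closed walk. -/
def NonSplit {V : Type*} {r : ℕ} (vtx : ZMod (2 * r) → V) : Prop := ¬ Splits vtx

end Polar

theorem ZMod.val_add_one_of_lt {N : ℕ} [NeZero N] {u : ZMod N} (h : u.val + 1 < N) :
    (u + 1).val = u.val + 1 := by
  have : Fact (1 < N) := ⟨by omega⟩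
  rw [ZMod.val_add, ZMod.val_one, Nat.mod_eq_of_lt h]

theorem ZMod.add_one_eq_zero_of_val_add_one_eq {N : ℕ} [NeZero N] {u : ZMod N} (h : u.val + 1 = N) :
    u + 1 = 0 := by
  rw [← ZMod.natCast_zmod_val u, ← Nat.cast_add_one, h, ZMod.natCast_self]

namespace PolarAlg

open Finset MvPolynomial

section AltSum

variable {M α : Type*} [AddCommGroup M] {N : ℕ}

def altSum (F : ZMod N → M) : M := ∑ j ∈ range N, (-1 : ℤ) ^ j • F j

def segment (F : ZMod N → α) (j : ZMod N) (L : ℕ) : ZMod L → α := fun t => F (j + (t.val : ZMod N))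

theorem altSum_add (F G : ZMod N → M) : altSum (F + G) = altSum F + altSum G := by
  simp only [altSum, Pi.add_apply, smul_add, sum_add_distrib]

theorem altSum_eq_sum_univ [NeZero N] (F : ZMod N → M) :
    altSum F = ∑ u : ZMod N, (-1 : ℤ) ^ u.val • F u := by
  refine sum_nbij' (fun j => (j : ZMod N)) ZMod.val (fun _ _ => mem_univ _)
    (fun u _ => mem_range.mpr u.val_lt) (fun j hj => ZMod.val_cast_of_lt (mem_range.mp hj))
    (fun u _ => ZMod.natCast_zmod_val u) fun j hj => ?_
  rw [ZMod.val_cast_of_lt (mem_range.mp hj)]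

theorem neg_one_pow_val_add [NeZero N] (hN : 2 ∣ N) (a b : ZMod N) :
    (-1 : ℤ) ^ (a + b).val = (-1) ^ a.val * (-1) ^ b.val := by
  rw [← pow_add, neg_one_pow_eq_pow_mod_two, ZMod.val_add, Nat.mod_mod_of_dvd _ hN,
    ← neg_one_pow_eq_pow_mod_two]

theorem neg_one_pow_mul_self {R : Type*} [Ring R] (a : ℕ) : (-1 : R) ^ a * (-1) ^ a = 1 := by
  rw [← pow_add, ← two_mul, pow_mul, neg_one_sq, one_pow]

theorem altSum_comp_add [NeZero N] (hN : 2 ∣ N) (c : ZMod N) (F : ZMod N → M) :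
    altSum (fun u => F (c + u)) = (-1 : ℤ) ^ c.val • altSum F := by
  rw [altSum_eq_sum_univ, altSum_eq_sum_univ, smul_sum]
  refine Fintype.sum_equiv (Equiv.addLeft c) _ _ fun u => ?_
  simp only [Equiv.coe_addLeft, smul_smul, neg_one_pow_val_add hN, ← mul_assoc,
    neg_one_pow_mul_self, one_mul]

theorem altSum_comp_add_eq_add_segment (F : ZMod N → M) (j : ZMod N) {a b : ℕ} (hab : a + b = N)
    (ha : Even a) :
    altSum (fun u => F (j + u)) = altSum (segment F j a) + altSum (segment F (j + a) b) := by
  rw [altSum, show range N = range (a + b) by rw [hab], sum_range_add]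
  congr 1
  · refine sum_congr rfl fun p hp => ?_
    simp only [segment, ZMod.val_cast_of_lt (mem_range.mp hp)]
  · refine sum_congr rfl fun p hp => ?_
    simp only [segment, ZMod.val_cast_of_lt (mem_range.mp hp), pow_add, ha.neg_one_pow, one_mul,
      Nat.cast_add, add_assoc]

variable {k ι : Type*} [Field k] [DecidableEq ι]

variable (k) in
def signedCount (eidx : ZMod N → ι) : ι → k := altSum fun u => Pi.single (eidx u) 1

theorem sum_mul_signedCount [Fintype ι] (g : ι → k) (eidx : ZMod N → ι) :
    ∑ i, g i * signedCount k eidx i = altSum (g ∘ eidx) := by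
  simp only [signedCount, altSum, Finset.sum_apply, Pi.smul_apply, mul_sum]
  rw [sum_comm]
  refine sum_congr rfl fun j _ => ?_
  simp [Pi.single_apply, mul_comm]

end AltSum

section ClosedWalks

variable {k ι : Type*} [Field k] {n : ℕ} {ε : ι → Sym2 (Fin n)}

theorem IsWalkIn.segment {r q : ℕ} (hq : 0 < q) {vtx : ZMod (2 * r) → Fin n}
    {eidx : ZMod (2 * r) → ι} (hw : IsWalkIn ε vtx eidx) {j : ZMod (2 * r)}
    (hv : vtx j = vtx (j + (2 * q : ℕ))) :
    IsWalkIn ε (segment vtx j (2 * q)) (segment eidx j (2 * q)) := by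
  have : NeZero (2 * q) := ⟨by omega⟩
  intro t
  have hnext : vtx (j + (t.val : ZMod (2 * r)) + 1) = PolarAlg.segment vtx j (2 * q) (t + 1) := by
    rcases (show t.val + 1 ≤ 2 * q from t.val_lt).lt_or_eq with h | h
    · rw [PolarAlg.segment, ZMod.val_add_one_of_lt h, Nat.cast_add_one, add_assoc]
    · rw [PolarAlg.segment, ZMod.add_one_eq_zero_of_val_add_one_eq h, ZMod.val_zero, Nat.cast_zero,
        add_zero, hv, show ((2 * q : ℕ) : ZMod (2 * r)) = t.val + 1 by rw [← Nat.cast_add_one, h],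
        add_assoc]
  rw [← hnext]
  exact hw _

variable [DecidableEq ι]

theorem IsWalkIn.signedCount_eq_zero_of_length_two (hinj : Function.Injective ε)
    {vtx : ZMod (2 * 1) → Fin n} {eidx : ZMod (2 * 1) → ι} (hw : IsWalkIn ε vtx eidx) : signedCount k eidx = 0 := by
  have h10 : eidx 1 = eidx 0 := hinj <| by
    rw [hw, hw, show (1 + 1 : ZMod (2 * 1)) = 0 by decide, zero_add, Sym2.eq_swap]
  simp [signedCount, altSum, sum_range_succ, h10]

theorem signedCount_segment {N : ℕ} (eidx : ZMod N → ι) (j : ZMod N) (L : ℕ) :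
    signedCount k (segment eidx j L) =
      altSum (segment (fun u => (Pi.single (eidx u) 1 : ι → k)) j L) :=
  rfl

theorem signedCount_eq_add_segment {r s : ℕ} (hr : 0 < r) (hsr : s ≤ r) (eidx : ZMod (2 * r) → ι)
    (j : ZMod (2 * r)) :
    signedCount k eidx = (-1 : ℤ) ^ j.val • (signedCount k (segment eidx j (2 * s)) +
      signedCount k (segment eidx (j + (2 * s : ℕ)) (2 * (r - s)))) := by
  have : NeZero (2 * r) := ⟨by omega⟩
  have hsplit := altSum_comp_add_eq_add_segment (fun u => (Pi.single (eidx u) 1 : ι → k)) j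
    (by omega : 2 * s + 2 * (r - s) = 2 * r) (even_two_mul s)
  have hrot := altSum_comp_add (dvd_mul_right 2 r) j fun u => (Pi.single (eidx u) 1 : ι → k)
  rw [hrot] at hsplit
  rw [signedCount_segment, signedCount_segment, ← hsplit, smul_smul, neg_one_pow_mul_self,
    one_smul, signedCount]

variable (k) in
def nonSplitSignedCounts (ε : ι → Sym2 (Fin n)) (P : ι → Prop) : Set (ι → k) :=
  {c | ∃ r, 2 ≤ r ∧ ∃ (vtx : ZMod (2 * r) → Fin n) (eidx : ZMod (2 * r) → ι),
    IsWalkIn ε vtx eidx ∧ Polar.NonSplit vtx ∧ (∀ u, P (eidx u)) ∧ c = signedCount k eidx}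

theorem IsWalkIn.signedCount_mem_span (hinj : Function.Injective ε) {P : ι → Prop} {r : ℕ}
    {vtx : ZMod (2 * r) → Fin n} {eidx : ZMod (2 * r) → ι} (hw : IsWalkIn ε vtx eidx)
    (hP : ∀ u, P (eidx u)) :
    signedCount k eidx ∈ Submodule.span k (nonSplitSignedCounts k ε P) := by
  induction r using Nat.strong_induction_on with
  | _ r ih =>
  obtain hr | hr := lt_or_ge r 2
  · interval_cases r
    · simp [signedCount, altSum]
    · rw [hw.signedCount_eq_zero_of_length_two hinj]
      exact zero_mem _
  · by_cases hns : Polar.NonSplit vtx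
    · exact Submodule.subset_span ⟨r, hr, vtx, eidx, hw, hns, hP, rfl⟩
    obtain ⟨j, s, hs, hsr, hv⟩ := not_not.mp hns
    have hv' : vtx (j + (2 * s : ℕ)) = vtx (j + (2 * s : ℕ) + (2 * (r - s) : ℕ)) := by
      rw [add_assoc, ← Nat.cast_add, show 2 * s + 2 * (r - s) = 2 * r by omega, ZMod.natCast_self,
        add_zero, hv]
    rw [signedCount_eq_add_segment (by omega) hsr.le eidx j]
    exact zsmul_mem (add_mem (ih s hsr (hw.segment hs hv) fun _ => hP _)
      (ih (r - s) (by omega) (hw.segment (by omega) hv') fun _ => hP _)) _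

end ClosedWalks

section Potential

variable {k V ι : Type*} [Field k] (ε : ι → Sym2 V) (P : ι → Prop) (φ : ι → k)

-- `t` is the alternating sum of `φ` along the walk, so that a potential with `ψ a + ψ b = φ i` on
-- every edge `i = ab` satisfies `ψ a = t + (-1) ^ l * ψ b`.
inductive AltWalk : V → V → ℕ → k → Prop
  | nil (a : V) : AltWalk a a 0 0
  | cons {i : ι} {a b c : V} {l : ℕ} {t : k} :
      P i → ε i = s(a, b) → AltWalk b c l t → AltWalk a c (l + 1) (φ i - t)

variable {ε P φ}

namespace AltWalk

theorem append {a b c : V} {l l' : ℕ} {t t' : k} (h : AltWalk ε P φ a b l t)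
    (h' : AltWalk ε P φ b c l' t') : AltWalk ε P φ a c (l + l') (t + (-1) ^ l * t') := by
  induction h with
  | nil => simpa using h'
  | cons hi he _ ih =>
    convert cons hi he (ih h') using 1
    · ring
    · ring

theorem edge {i : ι} {a b : V} (hi : P i) (he : ε i = s(a, b)) : AltWalk ε P φ a b 1 (φ i) := by
  simpa using (cons hi he (nil b) : AltWalk ε P φ a b (0 + 1) (φ i - 0))

theorem reverse {a b : V} {l : ℕ} {t : k} (h : AltWalk ε P φ a b l t) :
    AltWalk ε P φ b a l (-(-1) ^ l * t) := by
  induction h with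
  | nil a => simpa using nil a
  | cons hi he _ ih =>
    convert ih.append (edge hi (he.trans Sym2.eq_swap)) using 1
    ring

theorem eq_of_even_add (hcl : ∀ a l t, AltWalk ε P φ a a l t → Even l → t = 0) {a b : V}
    {l l' : ℕ} {t t' : k} (h : AltWalk ε P φ a b l t) (h' : AltWalk ε P φ a b l' t')
    (hl : Even (l + l')) : t = t' := by
  have hs : (-1 : k) ^ l * (-1) ^ l' = 1 := by rw [← pow_add, hl.neg_one_pow]
  linear_combination hcl _ _ _ (h.append h'.reverse) hl + t' * hs

end AltWalk

open Classical in
variable (ε P φ) in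
def basePotential (ρ : V) : k :=
  if h : ∃ p : ℕ × k, Odd p.1 ∧ AltWalk ε P φ ρ ρ p.1 p.2 then h.choose.2 / 2 else 0

theorem two_mul_basePotential [NeZero (2 : k)]
    (hcl : ∀ a l t, AltWalk ε P φ a a l t → Even l → t = 0) {ρ : V} {l : ℕ} {t : k}
    (hl : Odd l) (h : AltWalk ε P φ ρ ρ l t) : 2 * basePotential ε P φ ρ = t := by
  have hex : ∃ p : ℕ × k, Odd p.1 ∧ AltWalk ε P φ ρ ρ p.1 p.2 := ⟨(l, t), hl, h⟩
  simp only [basePotential, dif_pos hex, mul_div_cancel₀ _ (two_ne_zero : (2 : k) ≠ 0)]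
  exact hex.choose_spec.2.eq_of_even_add hcl h (hex.choose_spec.1.add_odd hl)

theorem AltWalk.potential_eq [NeZero (2 : k)]
    (hcl : ∀ a l t, AltWalk ε P φ a a l t → Even l → t = 0) {ρ v : V} {l l' : ℕ} {t t' : k}
    (h : AltWalk ε P φ ρ v l t) (h' : AltWalk ε P φ ρ v l' t') :
    (-1) ^ l * (basePotential ε P φ ρ - t) = (-1) ^ l' * (basePotential ε P φ ρ - t') := by
  set β := basePotential ε P φ ρ
  rcases Nat.even_or_odd (l + l') with he | ho
  · obtain rfl := h.eq_of_even_add hcl h' he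
    have hs : (-1 : k) ^ l * (-1) ^ l' = 1 := by rw [← pow_add, he.neg_one_pow]
    linear_combination ((-1) ^ l' * (β - t)) * hs -
      ((-1) ^ l * (β - t)) * neg_one_pow_mul_self (R := k) l'
  · have hs : (-1 : k) ^ l * (-1) ^ l' = -1 := by rw [← pow_add, ho.neg_one_pow]
    linear_combination (-(-1) ^ l' : k) * two_mul_basePotential hcl ho (h.append h'.reverse) +
      ((-1) ^ l' * (t' + β - t)) * hs - ((-1) ^ l * (β - t)) * neg_one_pow_mul_self (R := k) l'

theorem exists_potential [NeZero (2 : k)]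
    (hcl : ∀ a l t, AltWalk ε P φ a a l t → Even l → t = 0) :
    ∃ ψ : V → k, ∀ {a b l t}, AltWalk ε P φ a b l t → ψ a = t + (-1) ^ l * ψ b := by
  let S : Setoid V :=
    { r := fun a b => ∃ p : ℕ × k, AltWalk ε P φ a b p.1 p.2
      iseqv := ⟨fun a => ⟨(0, 0), .nil a⟩, fun ⟨p, h⟩ => ⟨(p.1, -(-1) ^ p.1 * p.2), h.reverse⟩,
        fun ⟨_, h⟩ ⟨_, h'⟩ => ⟨(_, _), h.append h'⟩⟩ }
  let root (v : V) : V := (Quotient.mk S v).out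
  have root_walk (v : V) : ∃ p : ℕ × k, AltWalk ε P φ (root v) v p.1 p.2 := Quotient.mk_out v
  let ψ (v : V) : k :=
    (-1) ^ (root_walk v).choose.1 * (basePotential ε P φ (root v) - (root_walk v).choose.2)
  have ψ_spec {v : V} {l : ℕ} {t : k} (h : AltWalk ε P φ (root v) v l t) :
      ψ v = (-1) ^ l * (basePotential ε P φ (root v) - t) :=
    (root_walk v).choose_spec.potential_eq hcl h
  refine ⟨ψ, fun {a b l t} h => ?_⟩
  obtain ⟨⟨l₁, t₁⟩, h₁⟩ := root_walk a
  have hroot : root a = root b := congrArg Quotient.out (Quotient.sound ⟨(l, t), h⟩)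
  have hb := ψ_spec (hroot ▸ h₁.append h)
  rw [← hroot] at hb
  rw [ψ_spec h₁, hb, pow_add]
  linear_combination (t - (-1) ^ l₁ * (basePotential ε P φ (root a) - t₁)) *
    neg_one_pow_mul_self (R := k) l + (t * (-1) ^ l * (-1) ^ l) * neg_one_pow_mul_self (R := k) l₁

end Potential

section Incidence

variable {k V ι : Type*} [Field k] {P : ι → Prop} {φ : ι → k}

theorem AltWalk.exists_fin {ε : ι → Sym2 V} {a b : V} {l : ℕ} {t : k}
    (h : AltWalk ε P φ a b l t) :
    ∃ (vf : Fin (l + 1) → V) (ef : Fin l → ι), vf 0 = a ∧ vf (Fin.last l) = b ∧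
      (∀ j, P (ef j) ∧ ε (ef j) = s(vf j.castSucc, vf j.succ)) ∧
      t = ∑ j : Fin l, (-1) ^ (j : ℕ) * φ (ef j) := by
  induction h with
  | nil a => exact ⟨fun _ => a, Fin.elim0, rfl, rfl, fun j => j.elim0, by simp⟩
  | @cons i a b c l t hi he _ ih =>
    obtain ⟨vf, ef, h0, hl, hw, ht⟩ := ih
    refine ⟨Fin.cons a vf, Fin.cons i ef, rfl, by simpa [← Fin.succ_last] using hl, fun j => ?_, ?_⟩
    · refine Fin.cases ⟨by simpa using hi, by simpa [h0] using he⟩ (fun j => ?_) j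
      simpa [← Fin.succ_castSucc] using hw j
    · simp [Fin.sum_univ_succ, ht, pow_succ, sum_neg_distrib, sub_eq_add_neg]

theorem AltWalk.exists_isWalkIn {n r : ℕ} {ε : ι → Sym2 (Fin n)} (hr : r ≠ 0) {a : Fin n} {t : k}
    (h : AltWalk ε P φ a a (2 * r) t) :
    ∃ (vtx : ZMod (2 * r) → Fin n) (eidx : ZMod (2 * r) → ι),
      IsWalkIn ε vtx eidx ∧ (∀ u, P (eidx u)) ∧ t = altSum (φ ∘ eidx) := by
  have : NeZero (2 * r) := ⟨by omega⟩
  obtain ⟨vf, ef, h0, hl, hw, ht⟩ := h.exists_fin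
  let idx (u : ZMod (2 * r)) : Fin (2 * r) := ⟨u.val, u.val_lt⟩
  refine ⟨fun u => vf (idx u).castSucc, fun u => ef (idx u), fun u => ?_, fun u => (hw _).1, ?_⟩
  · have hnext : vf (idx u).succ = vf (idx (u + 1)).castSucc := by
      rcases (show u.val + 1 ≤ 2 * r from u.val_lt).lt_or_eq with h | h
      · congr 1
        ext
        simp [idx, ZMod.val_add_one_of_lt h]
      · rw [show (idx u).succ = Fin.last _ from Fin.ext h, hl, ← h0]
        congr 1
        ext
        simp [idx, ZMod.add_one_eq_zero_of_val_add_one_eq h]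
    show ε (ef (idx u)) = s(vf (idx u).castSucc, vf (idx (u + 1)).castSucc)
    rw [(hw _).2, hnext]
  · rw [ht, altSum, Finset.sum_range]
    refine Fintype.sum_congr _ _ fun j => ?_
    have : idx (j : ℕ) = j := Fin.ext (ZMod.val_cast_of_lt j.isLt)
    simp [this, zsmul_eq_mul]

theorem sum_sym2Exp_mul {n : ℕ} (a b : Fin n) (ψ : Fin n → k) :
    ∑ l, (sym2Exp s(a, b) l : k) * ψ l = ψ a + ψ b := by
  simp [sym2Exp, add_mul, sum_add_distrib]

theorem mem_span_nonSplitSignedCounts [Fintype ι] [DecidableEq ι] [NeZero (2 : k)] {n : ℕ}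
    {ε : ι → Sym2 (Fin n)} (hinj : Function.Injective ε) {c : ι → k} (hcP : ∀ i, c i ≠ 0 → P i)
    (hc : ∀ l, ∑ i, (sym2Exp (ε i) l : k) * c i = 0) :
    c ∈ Submodule.span k (nonSplitSignedCounts k ε P) := by
  rw [← Subspace.forall_mem_dualAnnihilator_apply_eq_zero_iff]
  intro f hf
  set φ : ι → k := fun i => f (Pi.single i 1)
  have hf_apply (x : ι → k) : f x = ∑ i, φ i * x i := by
    conv_lhs => rw [pi_eq_sum_univ' x]
    simp [φ, mul_comm]
  have hcl (a : Fin n) (l : ℕ) (t : k) (h : AltWalk ε P φ a a l t) (hl : Even l) : t = 0 := by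
    obtain ⟨r, rfl⟩ := hl.two_dvd
    rcases eq_or_ne r 0 with rfl | hr
    · obtain ⟨-, -, -, -, -, rfl⟩ := h.exists_fin
      simp
    obtain ⟨vtx, eidx, hw, hP, rfl⟩ := h.exists_isWalkIn hr
    rw [← sum_mul_signedCount, ← hf_apply]
    exact (Submodule.mem_dualAnnihilator _).mp hf _ (hw.signedCount_mem_span hinj hP)
  obtain ⟨ψ, hψ⟩ := exists_potential hcl
  have hφ (i : ι) (hi : P i) : φ i = ∑ l, (sym2Exp (ε i) l : k) * ψ l := by
    obtain ⟨⟨a, b⟩, he⟩ := Sym2.mk_surjective (ε i)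
    change s(a, b) = ε i at he
    rw [← he, sum_sym2Exp_mul, hψ (AltWalk.edge hi he.symm)]
    ring
  calc f c = ∑ i, ∑ l, (sym2Exp (ε i) l : k) * c i * ψ l := by
        rw [hf_apply]
        refine sum_congr rfl fun i _ => ?_
        by_cases hci : c i = 0
        · simp [hci]
        · rw [hφ i (hcP i hci), sum_mul]
          exact sum_congr rfl fun l _ => by ring
    _ = 0 := by
        rw [sum_comm]
        simp [← sum_mul, hc]

end Incidence

section Monomials

variable {k ι : Type*} [Field k] {n : ℕ} {ε : ι → Sym2 (Fin n)}

def edgeExp (ε : ι → Sym2 (Fin n)) (i : ι) : Fin n →₀ ℕ :=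
  Finsupp.equivFunOnFinite.symm (sym2Exp (ε i))

def walkExp {r : ℕ} (vtx : ZMod (2 * r) → Fin n) : Fin n →₀ ℕ :=
  Finsupp.equivFunOnFinite.symm (supExp vtx)

theorem mon_eq_monomial (g : Fin n → ℕ) :
    mon k g = monomial (Finsupp.equivFunOnFinite.symm g) 1 := by
  rw [monomial_eq, C_1, one_mul, Finsupp.prod_fintype _ _ fun i => pow_zero _]
  rfl

theorem fmon_eq_monomial (ε : ι → Sym2 (Fin n)) (i : ι) :
    fmon k ε i = monomial (edgeExp ε i) 1 :=
  mon_eq_monomial _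

theorem fmon_ne_zero (ε : ι → Sym2 (Fin n)) (i : ι) : fmon k ε i ≠ 0 := by
  rw [fmon_eq_monomial, Ne, monomial_eq_zero]
  exact one_ne_zero

theorem IsWalkIn.edgeExp_le_walkExp {r : ℕ} [NeZero (2 * r)] {vtx : ZMod (2 * r) → Fin n}
    {eidx : ZMod (2 * r) → ι} (hw : IsWalkIn ε vtx eidx) (u : ZMod (2 * r)) :
    edgeExp ε (eidx u) ≤ walkExp vtx := fun l => by
  have := le_sup (f := fun j : ℕ => sym2Exp s(vtx j, vtx (j + 1)) l) (mem_range.mpr u.val_lt)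
  simpa [edgeExp, walkExp, supExp, hw u] using this

theorem IsWalkIn.walkExp_le {r : ℕ} {vtx : ZMod (2 * r) → Fin n} {eidx : ZMod (2 * r) → ι}
    (hw : IsWalkIn ε vtx eidx) {D : Fin n →₀ ℕ} (hD : ∀ u, edgeExp ε (eidx u) ≤ D) :
    walkExp vtx ≤ D := fun l => by
  refine (Finset.sup_le fun j _ => ?_ : supExp vtx l ≤ D l)
  simpa [edgeExp, hw (j : ZMod (2 * r))] using hD (j : ZMod (2 * r)) l

theorem IsWalkIn.edgeExp_le_walkExp_of_ne_zero [DecidableEq ι] {r : ℕ}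
    {vtx : ZMod (2 * r) → Fin n} {eidx : ZMod (2 * r) → ι} (hw : IsWalkIn ε vtx eidx) {i : ι}
    (hi : signedCount k eidx i ≠ 0) : edgeExp ε i ≤ walkExp vtx := by
  rcases eq_or_ne r 0 with rfl | hr
  · simp [signedCount, altSum] at hi
  have : NeZero (2 * r) := ⟨by omega⟩
  obtain ⟨u, rfl⟩ : ∃ u, eidx u = i := by
    by_contra! hne
    exact hi (by simp [signedCount, altSum, fun u => (hne u).symm])
  exact hw.edgeExp_le_walkExp u

variable (k) in
def monomialVec (ε : ι → Sym2 (Fin n)) (D : Fin n →₀ ℕ) :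
    (ι → k) →ₗ[k] ι → MvPolynomial (Fin n) k :=
  LinearMap.pi fun i => (monomial (D - edgeExp ε i)).comp (LinearMap.proj i)

@[simp]
theorem monomialVec_apply (D : Fin n →₀ ℕ) (c : ι → k) (i : ι) :
    monomialVec k ε D c i = monomial (D - edgeExp ε i) (c i) :=
  rfl

theorem monomialVec_eq_smul {G D : Fin n →₀ ℕ} {c : ι → k}
    (hcG : ∀ i, c i ≠ 0 → edgeExp ε i ≤ G) (hGD : G ≤ D) :
    monomialVec k ε D c = monomial (D - G) (1 : k) • monomialVec k ε G c := by
  funext i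
  by_cases hci : c i = 0
  · simp [hci]
  · simp only [monomialVec_apply, Pi.smul_apply, smul_eq_mul, monomial_mul, one_mul,
      tsub_add_tsub_cancel hGD (hcG i hci)]

theorem zw_eq_monomialVec [DecidableEq ι] {r : ℕ} (vtx : ZMod (2 * r) → Fin n)
    (eidx : ZMod (2 * r) → ι) :
    zw k ε vtx eidx = monomialVec k ε (walkExp vtx) (signedCount k eidx) := by
  funext i
  have hmon : mon k (fun l => supExp vtx l - sym2Exp (ε i) l) =
      monomial (walkExp vtx - edgeExp ε i) 1 := by
    rw [mon_eq_monomial]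
    congr 2
    ext
    simp [walkExp, edgeExp]
  simp only [zw, hmon, monomialVec_apply, signedCount, altSum, Finset.sum_apply, map_sum]
  refine sum_congr rfl fun j _ => ?_
  by_cases h : eidx j = i
  · simp [h, zsmul_eq_mul, monomial_eq]
  · simp [h, Ne.symm h]

def degreeCoeff (ε : ι → Sym2 (Fin n)) (D : Fin n →₀ ℕ) (a : ι → MvPolynomial (Fin n) k) :
    ι → k :=
  fun i => coeff D (a i * fmon k ε i)

theorem edgeExp_le_of_degreeCoeff_ne_zero {D : Fin n →₀ ℕ} {a : ι → MvPolynomial (Fin n) k}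
    {i : ι} (h : degreeCoeff ε D a i ≠ 0) : edgeExp ε i ≤ D := by
  by_contra hle
  simp [degreeCoeff, fmon_eq_monomial, coeff_mul_monomial', hle] at h

theorem sum_monomialVec_degreeCoeff [Fintype ι] (a : ι → MvPolynomial (Fin n) k) :
    ∑ D ∈ univ.biUnion (fun i => (a i * fmon k ε i).support),
      monomialVec k ε D (degreeCoeff ε D a) = a := by
  funext i
  refine mul_right_cancel₀ (fmon_ne_zero ε i) ?_
  rw [Finset.sum_apply, sum_mul, ← sum_subset (subset_biUnion_of_mem
    (fun i => (a i * fmon k ε i).support) (mem_univ i)) fun D _ hD => ?_]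
  · conv_rhs => rw [as_sum (a i * fmon k ε i)]
    refine sum_congr rfl fun D hD => ?_
    have hE := edgeExp_le_of_degreeCoeff_ne_zero (mem_support_iff.mp hD)
    simp only [monomialVec_apply, degreeCoeff, fmon_eq_monomial, monomial_mul, mul_one,
      tsub_add_cancel_of_le hE]
  · simp [degreeCoeff, notMem_support_iff.mp hD]

theorem mem_Zset_iff [Fintype ι] {a : ι → MvPolynomial (Fin n) k} :
    a ∈ Zset k n ε ↔ ∀ D l, ∑ i, (sym2Exp (ε i) l : k) * degreeCoeff ε D a i = 0 := by
  rw [forall_comm]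
  refine forall_congr' fun l => ?_
  have hX : X l * ∑ i, a i * pderiv l (fmon k ε i) = ∑ i, sym2Exp (ε i) l • (a i * fmon k ε i) := by
    simp only [mul_sum, fmon_eq_monomial, mul_left_comm (X l), X_mul_pderiv_monomial,
      mul_smul_comm]
    rfl
  -- `X l * pderiv l` multiplies the monomial `f i` by its degree in `X l`
  rw [← mul_right_injective₀ (X_ne_zero l : (X l : MvPolynomial (Fin n) k) ≠ 0) |>.eq_iff,
    mul_zero, hX, MvPolynomial.ext_iff]
  simp only [coeff_sum, ← Nat.cast_smul_eq_nsmul k, coeff_smul, smul_eq_mul, coeff_zero,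
    degreeCoeff]

end Monomials

section Syzygies

variable {k ι : Type*} [Field k] [Fintype ι] {n : ℕ} {ε : ι → Sym2 (Fin n)}

theorem Zset_eq_ker (ε : ι → Sym2 (Fin n)) :
    Zset k n ε =
      LinearMap.ker (Matrix.vecMulLinear (Matrix.of fun i l => pderiv l (fmon k ε i))) := by
  ext a
  simp [Zset, funext_iff, Matrix.vecMul, dotProduct]

theorem monomialVec_mem_Zset {G : Fin n →₀ ℕ} {c : ι → k} (hcG : ∀ i, c i ≠ 0 → edgeExp ε i ≤ G)
    (hc : ∀ l, ∑ i, (sym2Exp (ε i) l : k) * c i = 0) : monomialVec k ε G c ∈ Zset k n ε := by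
  refine mem_Zset_iff.mpr fun D l => ?_
  have hcoeff (i : ι) : degreeCoeff ε D (monomialVec k ε G c) i = if G = D then c i else 0 := by
    by_cases hci : c i = 0
    · simp [degreeCoeff, hci]
    · simp [degreeCoeff, fmon_eq_monomial, monomial_mul, coeff_monomial,
        tsub_add_cancel_of_le (hcG i hci)]
  simp only [hcoeff]
  split_ifs
  · exact hc l
  · simp

theorem IsWalkIn.sum_sym2Exp_mul_signedCount [DecidableEq ι] {r : ℕ} {vtx : ZMod (2 * r) → Fin n}
    {eidx : ZMod (2 * r) → ι} (hw : IsWalkIn ε vtx eidx) (l : Fin n) :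
    ∑ i, (sym2Exp (ε i) l : k) * signedCount k eidx i = 0 := by
  rcases eq_or_ne r 0 with rfl | hr
  · simp [signedCount, altSum]
  have : NeZero (2 * r) := ⟨by omega⟩
  have : Fact (1 < 2 * r) := ⟨by omega⟩
  let A : ZMod (2 * r) → k := fun u => if vtx u = l then 1 else 0
  have hA : (fun u => (sym2Exp (ε (eidx u)) l : k)) = A + fun u => A (1 + u) := by
    funext u
    simp [A, hw u, sym2Exp, add_comm]
  rw [sum_mul_signedCount, Function.comp_def, hA, altSum_add, altSum_comp_add (dvd_mul_right 2 r),
    ZMod.val_one]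
  simp

theorem IsWalkIn.zw_mem_Zset [DecidableEq ι] {r : ℕ} {vtx : ZMod (2 * r) → Fin n}
    {eidx : ZMod (2 * r) → ι} (hw : IsWalkIn ε vtx eidx) : zw k ε vtx eidx ∈ Zset k n ε := by
  rw [zw_eq_monomialVec]
  exact monomialVec_mem_Zset (fun _ => hw.edgeExp_le_walkExp_of_ne_zero)
    hw.sum_sym2Exp_mul_signedCount

variable (k) in
def walkSyzygies (ε : ι → Sym2 (Fin n)) [DecidableEq ι] : Set (ι → MvPolynomial (Fin n) k) :=
  {a | ∃ r : ℕ, 2 ≤ r ∧ ∃ (vtx : ZMod (2 * r) → Fin n) (eidx : ZMod (2 * r) → ι),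
    IsWalkIn ε vtx eidx ∧ Polar.NonSplit vtx ∧ a = zw k ε vtx eidx}

theorem monomialVec_mem_span_walkSyzygies [DecidableEq ι] [NeZero (2 : k)]
    (hinj : Function.Injective ε) {D : Fin n →₀ ℕ} {c : ι → k}
    (hcD : ∀ i, c i ≠ 0 → edgeExp ε i ≤ D) (hc : ∀ l, ∑ i, (sym2Exp (ε i) l : k) * c i = 0) :
    monomialVec k ε D c ∈ Submodule.span (MvPolynomial (Fin n) k) (walkSyzygies k ε) := by
  refine (Submodule.span_le (p := ((Submodule.span _ (walkSyzygies k ε)).restrictScalars k).comap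
    (monomialVec k ε D))).mpr ?_ (mem_span_nonSplitSignedCounts hinj hcD hc)
  rintro _ ⟨r, hr, vtx, eidx, hw, hns, hD, rfl⟩
  have : NeZero (2 * r) := ⟨by omega⟩
  show monomialVec k ε D (signedCount k eidx) ∈ Submodule.span _ _
  rw [monomialVec_eq_smul (fun _ => hw.edgeExp_le_walkExp_of_ne_zero) (hw.walkExp_le hD),
    ← zw_eq_monomialVec]
  exact Submodule.smul_mem _ _ (Submodule.subset_span ⟨r, hr, vtx, eidx, hw, hns, rfl⟩)

end Syzygies

end PolarAlg

open PolarAlg MvPolynomial in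
/-- Theorem 4.4: the differential syzygy module `Z` of a set `f` of distinct degree-2
monomials is generated by the vectors `z_w`, over all non-split even closed walks `w` of
length ≥ 4 of the graph `G(f)`. -/
theorem differential_syzygies_generated_by_walks (k : Type*) [Field k] [CharZero k]
    {n m : ℕ} (ε : Fin m → Sym2 (Fin n)) (hinj : Function.Injective ε) :
    Zset k n ε =
      ↑(Submodule.span (MvPolynomial (Fin n) k)
        {a : Fin m → MvPolynomial (Fin n) k |
          ∃ r : ℕ, 2 ≤ r ∧ ∃ (vtx : ZMod (2 * r) → Fin n) (eidx : ZMod (2 * r) → Fin m),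
            IsWalkIn ε vtx eidx ∧ Polar.NonSplit vtx ∧ a = zw k ε vtx eidx}) := by
  refine Set.Subset.antisymm (fun a ha => ?_) ?_
  · rw [← sum_monomialVec_degreeCoeff (ε := ε) a]
    exact Submodule.sum_mem _ fun D _ => monomialVec_mem_span_walkSyzygies hinj
      (fun _ => edgeExp_le_of_degreeCoeff_ne_zero) (mem_Zset_iff.mp ha D)
  · rw [Zset_eq_ker]
    exact Submodule.span_le.mpr fun _ ⟨_, _, _, _, hw, _, he⟩ =>
      he ▸ (Zset_eq_ker ε).subset hw.zw_mem_Zset
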